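/- arXiv:2104.07866 — 4 statements merged into one kernel-verified Lean document; each statement's English description precedes it below -/
import Mathlib

section
/- Suppose real numbers c_{k,ℓ} for k, ℓ ∈ {-1,0,1} satisfy ∑_{k=-1}^{1} ∑_{ℓ=-1}^{1} c_{k,ℓ} p(k,ℓ) = 0 for every harmonic polynomial p of total degree at most 7. Then there exists a real constant λ such that c_{0,0} = -20λ, c_{±1,0} = c_{0,±1} = 4λ, and c_{±1,±1} = λ. In other words, the solution space of this linear system is one-dimensional and spanned by the sixth-order compact stencil. -/
open Finset MvPolynomial

/-- The nine coefficients of the sixth-order compact 9-point stencil. -/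
noncomputable def Cstencil (k l : ℤ) : ℝ :=
  if k = 0 ∧ l = 0 then -20 else if k = 0 ∨ l = 0 then 4 else 1

lemma pderiv_ofNat' (i : Fin 2) (n : ℕ) [n.AtLeastTwo] :
    pderiv i (no_index (OfNat.ofNat n) : MvPolynomial (Fin 2) ℝ) = 0 := by
  rw [← Nat.cast_ofNat (R := MvPolynomial (Fin 2) ℝ)]
  exact Derivation.map_natCast _ _

lemma td_term (r : ℝ) (a b : ℕ) (h : a + b ≤ 7) :
    (C r * X 0 ^ a * X 1 ^ b : MvPolynomial (Fin 2) ℝ).totalDegree ≤ 7 := by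
  have h0 := totalDegree_mul (C r * X 0 ^ a : MvPolynomial (Fin 2) ℝ) (X 1 ^ b)
  have h1 := totalDegree_mul (C r : MvPolynomial (Fin 2) ℝ) (X 0 ^ a)
  have h2 := totalDegree_pow (X 0 : MvPolynomial (Fin 2) ℝ) a
  have h3 := totalDegree_pow (X 1 : MvPolynomial (Fin 2) ℝ) b
  simp [totalDegree_C, totalDegree_X] at *
  omega

lemma td_add {p q : MvPolynomial (Fin 2) ℝ} (hp : p.totalDegree ≤ 7) (hq : q.totalDegree ≤ 7) :
    (p + q).totalDegree ≤ 7 :=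
  (totalDegree_add p q).trans (max_le hp hq)

set_option maxHeartbeats 2000000 in
theorem stencil_solution_space_one_dim (c : ℤ → ℤ → ℝ)
    (hc : ∀ p : MvPolynomial (Fin 2) ℝ, p.totalDegree ≤ 7 →
      pderiv 0 (pderiv 0 p) + pderiv 1 (pderiv 1 p) = 0 →
      ∑ k ∈ Finset.Icc (-1 : ℤ) 1, ∑ l ∈ Finset.Icc (-1 : ℤ) 1,
        c k l * eval ![(k : ℝ), (l : ℝ)] p = 0) :
    ∃ lam : ℝ, ∀ k ∈ Finset.Icc (-1 : ℤ) 1, ∀ l ∈ Finset.Icc (-1 : ℤ) 1,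
      c k l = lam * Cstencil k l := by
  have hIcc : Finset.Icc (-1:ℤ) 1 = {-1, 0, 1} := by decide
  have harm : ∀ p : MvPolynomial (Fin 2) ℝ, p.totalDegree ≤ 7 →
      pderiv 0 (pderiv 0 p) + pderiv 1 (pderiv 1 p) = 0 →
      ∑ k ∈ ({-1, 0, 1} : Finset ℤ), ∑ l ∈ ({-1, 0, 1} : Finset ℤ),
        c k l * eval ![(k : ℝ), (l : ℝ)] p = 0 := by
    intro p h1 h2
    rw [← hIcc]
    exact hc p h1 h2
  -- constant 1
  have E1 := harm (C 1 * X 0 ^ 0 * X 1 ^ 0)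
    (td_term _ _ _ (by norm_num))
    (by
      simp only [map_add, pderiv_mul, pderiv_pow, pderiv_X_self,
        pderiv_X_of_ne (by decide : (0:Fin 2) ≠ 1), pderiv_X_of_ne (by decide : (1:Fin 2) ≠ 0),
        pderiv_C, Derivation.map_one_eq_zero, map_mul, map_zero, pderiv_ofNat',
        Derivation.map_natCast, map_one, map_neg, map_ofNat]
      ring)
  -- xy
  have E2 := harm (C 1 * X 0 ^ 1 * X 1 ^ 1)
    (td_term _ _ _ (by norm_num))
    (by
      simp only [map_add, pderiv_mul, pderiv_pow, pderiv_X_self,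
        pderiv_X_of_ne (by decide : (0:Fin 2) ≠ 1), pderiv_X_of_ne (by decide : (1:Fin 2) ≠ 0),
        pderiv_C, Derivation.map_one_eq_zero, map_mul, map_zero, pderiv_ofNat',
        Derivation.map_natCast, map_one, map_neg, map_ofNat]
      ring)
  -- x^2 - y^2
  have E3 := harm (C 1 * X 0 ^ 2 * X 1 ^ 0 + C (-1) * X 0 ^ 0 * X 1 ^ 2)
    (td_add (td_term _ _ _ (by norm_num)) (td_term _ _ _ (by norm_num)))
    (by
      simp only [map_add, pderiv_mul, pderiv_pow, pderiv_X_self,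
        pderiv_X_of_ne (by decide : (0:Fin 2) ≠ 1), pderiv_X_of_ne (by decide : (1:Fin 2) ≠ 0),
        pderiv_C, Derivation.map_one_eq_zero, map_mul, map_zero, pderiv_ofNat',
        Derivation.map_natCast, map_one, map_neg, map_ofNat]
      ring)
  -- x^3 - 3xy^2
  have E4 := harm (C 1 * X 0 ^ 3 * X 1 ^ 0 + C (-3) * X 0 ^ 1 * X 1 ^ 2)
    (td_add (td_term _ _ _ (by norm_num)) (td_term _ _ _ (by norm_num)))
    (by
      simp only [map_add, pderiv_mul, pderiv_pow, pderiv_X_self,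
        pderiv_X_of_ne (by decide : (0:Fin 2) ≠ 1), pderiv_X_of_ne (by decide : (1:Fin 2) ≠ 0),
        pderiv_C, Derivation.map_one_eq_zero, map_mul, map_zero, pderiv_ofNat',
        Derivation.map_natCast, map_one, map_neg, map_ofNat]
      ring)
  -- 3x^2 y - y^3
  have E5 := harm (C 3 * X 0 ^ 2 * X 1 ^ 1 + C (-1) * X 0 ^ 0 * X 1 ^ 3)
    (td_add (td_term _ _ _ (by norm_num)) (td_term _ _ _ (by norm_num)))
    (by
      simp only [map_add, pderiv_mul, pderiv_pow, pderiv_X_self,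
        pderiv_X_of_ne (by decide : (0:Fin 2) ≠ 1), pderiv_X_of_ne (by decide : (1:Fin 2) ≠ 0),
        pderiv_C, Derivation.map_one_eq_zero, map_mul, map_zero, pderiv_ofNat',
        Derivation.map_natCast, map_one, map_neg, map_ofNat]
      ring)
  -- x^4 - 6x^2 y^2 + y^4
  have E6 := harm (C 1 * X 0 ^ 4 * X 1 ^ 0 + C (-6) * X 0 ^ 2 * X 1 ^ 2 + C 1 * X 0 ^ 0 * X 1 ^ 4)
    (td_add (td_add (td_term _ _ _ (by norm_num)) (td_term _ _ _ (by norm_num)))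
      (td_term _ _ _ (by norm_num)))
    (by
      simp only [map_add, pderiv_mul, pderiv_pow, pderiv_X_self,
        pderiv_X_of_ne (by decide : (0:Fin 2) ≠ 1), pderiv_X_of_ne (by decide : (1:Fin 2) ≠ 0),
        pderiv_C, Derivation.map_one_eq_zero, map_mul, map_zero, pderiv_ofNat',
        Derivation.map_natCast, map_one, map_neg, map_ofNat]
      ring)
  -- x^5 - 10x^3 y^2 + 5x y^4
  have E7 := harm (C 1 * X 0 ^ 5 * X 1 ^ 0 + C (-10) * X 0 ^ 3 * X 1 ^ 2 + C 5 * X 0 ^ 1 * X 1 ^ 4)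
    (td_add (td_add (td_term _ _ _ (by norm_num)) (td_term _ _ _ (by norm_num)))
      (td_term _ _ _ (by norm_num)))
    (by
      simp only [map_add, pderiv_mul, pderiv_pow, pderiv_X_self,
        pderiv_X_of_ne (by decide : (0:Fin 2) ≠ 1), pderiv_X_of_ne (by decide : (1:Fin 2) ≠ 0),
        pderiv_C, Derivation.map_one_eq_zero, map_mul, map_zero, pderiv_ofNat',
        Derivation.map_natCast, map_one, map_neg, map_ofNat]
      ring)
  -- 5x^4 y - 10x^2 y^3 + y^5
  have E8 := harm (C 5 * X 0 ^ 4 * X 1 ^ 1 + C (-10) * X 0 ^ 2 * X 1 ^ 3 + C 1 * X 0 ^ 0 * X 1 ^ 5)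
    (td_add (td_add (td_term _ _ _ (by norm_num)) (td_term _ _ _ (by norm_num)))
      (td_term _ _ _ (by norm_num)))
    (by
      simp only [map_add, pderiv_mul, pderiv_pow, pderiv_X_self,
        pderiv_X_of_ne (by decide : (0:Fin 2) ≠ 1), pderiv_X_of_ne (by decide : (1:Fin 2) ≠ 0),
        pderiv_C, Derivation.map_one_eq_zero, map_mul, map_zero, pderiv_ofNat',
        Derivation.map_natCast, map_one, map_neg, map_ofNat]
      ring)
  norm_num [Finset.sum_insert, Finset.mem_insert] at E1 E2 E3 E4 E5 E6 E7 E8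
  refine ⟨c (-1) (-1), ?_⟩
  intro k hk l hl
  rw [hIcc] at hk hl
  fin_cases hk <;> fin_cases hl <;>
    simp only [Cstencil] <;> norm_num <;> linarith [E1, E2, E3, E4, E5, E6, E7, E8]
end

section
/- For every positive integer p and all real r, s, define g₀(p) := ∑_{ℓ=0}^{⌊p/2⌋} (-1)^ℓ r^{2ℓ} s^{p-2ℓ}/((2ℓ)!(p-2ℓ)!) and g₁(p) := ∑_{ℓ=0}^{⌊(p-1)/2⌋} (-1)^ℓ r^{2ℓ+1} s^{p-1-2ℓ}/((2ℓ+1)!(p-1-2ℓ)!). Then (p!)²·(g₀(p)² + g₁(p)²) = (r² + s²)^p. -/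
open Finset

noncomputable def g0 (p : ℕ) (r s : ℝ) : ℝ :=
  ∑ ℓ ∈ Finset.range (p / 2 + 1),
    (-1 : ℝ) ^ ℓ * r ^ (2 * ℓ) * s ^ (p - 2 * ℓ) /
      ((Nat.factorial (2 * ℓ) : ℝ) * (Nat.factorial (p - 2 * ℓ) : ℝ))

noncomputable def g1 (p : ℕ) (r s : ℝ) : ℝ :=
  ∑ ℓ ∈ Finset.range ((p - 1) / 2 + 1),
    (-1 : ℝ) ^ ℓ * r ^ (2 * ℓ + 1) * s ^ (p - 1 - 2 * ℓ) /
      ((Nat.factorial (2 * ℓ + 1) : ℝ) * (Nat.factorial (p - 1 - 2 * ℓ) : ℝ))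

open Complex in
lemma key (p : ℕ) (hp : 1 ≤ p) (r s : ℝ) :
    ((r : ℂ) * Complex.I + (s : ℂ)) ^ p
      = (Nat.factorial p : ℝ) * (g0 p r s)
        + ((Nat.factorial p : ℝ) * (g1 p r s)) * Complex.I := by
  rw [add_pow]
  rw [← Finset.sum_filter_add_sum_filter_not (Finset.range (p + 1)) (fun k => Even k)]
  have hE : ∑ k ∈ (Finset.range (p + 1)).filter (fun k => Even k),
      ((r : ℂ) * Complex.I) ^ k * (s : ℂ) ^ (p - k) * (p.choose k : ℂ)
      = ((Nat.factorial p : ℝ) * (g0 p r s) : ℝ) := by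
    rw [g0]
    push_cast [Finset.mul_sum]
    refine Finset.sum_nbij' (fun k => k / 2) (fun ℓ => 2 * ℓ) ?_ ?_ ?_ ?_ ?_
    · intro k hk
      simp only [Finset.mem_filter, Finset.mem_range] at hk
      obtain ⟨hk1, m, hm⟩ := hk
      simp only [Finset.mem_range]; omega
    · intro ℓ hl
      simp only [Finset.mem_range] at hl
      simp only [Finset.mem_filter, Finset.mem_range]
      exact ⟨by omega, ⟨ℓ, by omega⟩⟩
    · intro k hk
      simp only [Finset.mem_filter, Finset.mem_range] at hk
      obtain ⟨hk1, m, hm⟩ := hk; omega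
    · intro ℓ hl; omega
    · intro k hk
      simp only [Finset.mem_filter, Finset.mem_range] at hk
      obtain ⟨hk1, m, hm⟩ := hk
      have hk2 : k = 2 * (k / 2) := by omega
      set ℓ := k / 2 with hℓ
      rw [hk2]
      have hle : 2 * ℓ ≤ p := by omega
      have hch : (p.choose (2 * ℓ) : ℂ) =
          (p.factorial : ℂ) / ((2 * ℓ).factorial * (p - 2 * ℓ).factorial) :=
        Nat.cast_choose ℂ hle
      have hI : (Complex.I) ^ (2 * ℓ) = (-1 : ℂ) ^ ℓ := by
        rw [pow_mul, Complex.I_sq]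
      rw [mul_pow, hI, hch]
      have h1 : ((2 * ℓ).factorial : ℂ) ≠ 0 := Nat.cast_ne_zero.mpr (Nat.factorial_ne_zero _)
      have h2 : ((p - 2 * ℓ).factorial : ℂ) ≠ 0 := Nat.cast_ne_zero.mpr (Nat.factorial_ne_zero _)
      field_simp
  have hO : ∑ k ∈ (Finset.range (p + 1)).filter (fun k => ¬ Even k),
      ((r : ℂ) * Complex.I) ^ k * (s : ℂ) ^ (p - k) * (p.choose k : ℂ)
      = (((Nat.factorial p : ℝ) * (g1 p r s) : ℝ) : ℂ) * Complex.I := by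
    rw [g1]
    push_cast [Finset.mul_sum, Finset.sum_mul]
    refine Finset.sum_nbij' (fun k => (k - 1) / 2) (fun ℓ => 2 * ℓ + 1) ?_ ?_ ?_ ?_ ?_
    · intro k hk
      simp only [Finset.mem_filter, Finset.mem_range, Nat.not_even_iff] at hk
      simp only [Finset.mem_range]; omega
    · intro ℓ hl
      simp only [Finset.mem_range] at hl
      simp only [Finset.mem_filter, Finset.mem_range, Nat.not_even_iff]
      omega
    · intro k hk
      simp only [Finset.mem_filter, Finset.mem_range, Nat.not_even_iff] at hk
      omega
    · intro ℓ hl; omega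
    · intro k hk
      simp only [Finset.mem_filter, Finset.mem_range, Nat.not_even_iff] at hk
      have hk2 : k = 2 * ((k - 1) / 2) + 1 := by omega
      set ℓ := (k - 1) / 2 with hℓ
      rw [hk2]
      have hle : 2 * ℓ + 1 ≤ p := by omega
      have hsub : p - (2 * ℓ + 1) = p - 1 - 2 * ℓ := by omega
      have hch : (p.choose (2 * ℓ + 1) : ℂ) =
          (p.factorial : ℂ) / ((2 * ℓ + 1).factorial * (p - (2 * ℓ + 1)).factorial) :=
        Nat.cast_choose ℂ hle
      have hI : (Complex.I) ^ (2 * ℓ + 1) = (-1 : ℂ) ^ ℓ * Complex.I := by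
        rw [pow_succ, pow_mul, Complex.I_sq]
      rw [mul_pow, hI, hch, hsub]
      have h1 : ((2 * ℓ + 1).factorial : ℂ) ≠ 0 := Nat.cast_ne_zero.mpr (Nat.factorial_ne_zero _)
      have h2 : ((p - 1 - 2 * ℓ).factorial : ℂ) ≠ 0 := Nat.cast_ne_zero.mpr (Nat.factorial_ne_zero _)
      field_simp
  rw [hE, hO]
  push_cast
  ring

theorem factorial_sq_sum (p : ℕ) (hp : 1 ≤ p) (r s : ℝ) :
    ((Nat.factorial p : ℝ)) ^ 2 * ((g0 p r s) ^ 2 + (g1 p r s) ^ 2)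
      = (r ^ 2 + s ^ 2) ^ p := by
  have h := congrArg Complex.normSq (key p hp r s)
  rw [map_pow] at h
  have hz : Complex.normSq ((r : ℂ) * Complex.I + (s : ℂ)) = r ^ 2 + s ^ 2 := by
    simp [Complex.normSq_apply]; ring
  have hw : Complex.normSq ((Nat.factorial p : ℝ) * (g0 p r s)
        + ((Nat.factorial p : ℝ) * (g1 p r s)) * Complex.I)
      = ((Nat.factorial p : ℝ)) ^ 2 * ((g0 p r s) ^ 2 + (g1 p r s) ^ 2) := by
    rw [show ((Nat.factorial p : ℝ) * (g0 p r s) : ℂ)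
        + ((Nat.factorial p : ℝ) * (g1 p r s) : ℂ) * Complex.I
        = ((Nat.factorial p * (g0 p r s) : ℝ) : ℂ)
        + ((Nat.factorial p * (g1 p r s) : ℝ) : ℂ) * Complex.I by push_cast; ring]
    rw [Complex.normSq_add_mul_I]
    ring
  rw [hz, hw] at h
  exact h.symm
end

section
/- Fix a positive integer p and real numbers r, s. Let g₀ := G_{0,p}(r,s), g₁ := G_{1,p-1}(r,s), and define g̃₀ := ∇G_{0,p}(r,s)·(s,-r) and g̃₁ := ∇G_{1,p-1}(r,s)·(s,-r) (dot products of the gradients with the rotated vector (s,-r)). Then g̃₀ = -p·g₁ and g̃₁ = p·g₀, and consequently g₀·g̃₁ - g₁·g̃₀ = p·(g₀² + g₁²). -/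
open Finset

noncomputable def G (m n : ℕ) (x y : ℝ) : ℝ :=
  ∑ ℓ ∈ Finset.range (n / 2 + 1),
    (-1 : ℝ) ^ ℓ * x ^ (m + 2 * ℓ) * y ^ (n - 2 * ℓ) /
      ((Nat.factorial (m + 2 * ℓ) : ℝ) * (Nat.factorial (n - 2 * ℓ) : ℝ))

/-- `∂G/∂x` at `(x, y)`. -/
noncomputable def Gx (m n : ℕ) (x y : ℝ) : ℝ := deriv (fun t : ℝ => G m n t y) x

/-- `∂G/∂y` at `(x, y)`. -/
noncomputable def Gy (m n : ℕ) (x y : ℝ) : ℝ := deriv (fun t : ℝ => G m n x t) y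

lemma hasDerivAt_G_x (m n : ℕ) (x y : ℝ) :
    HasDerivAt (fun t : ℝ => G m n t y)
      (∑ ℓ ∈ Finset.range (n / 2 + 1),
        (-1 : ℝ) ^ ℓ * ((m + 2 * ℓ : ℕ) * x ^ (m + 2 * ℓ - 1)) * y ^ (n - 2 * ℓ) /
          ((Nat.factorial (m + 2 * ℓ) : ℝ) * (Nat.factorial (n - 2 * ℓ) : ℝ))) x := by
  unfold G
  apply HasDerivAt.fun_sum
  intro ℓ _
  exact (((hasDerivAt_pow (m + 2 * ℓ) x).const_mul ((-1:ℝ)^ℓ)).mul_const _).div_const _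

lemma hasDerivAt_G_y (m n : ℕ) (x y : ℝ) :
    HasDerivAt (fun t : ℝ => G m n x t)
      (∑ ℓ ∈ Finset.range (n / 2 + 1),
        (-1 : ℝ) ^ ℓ * x ^ (m + 2 * ℓ) * ((n - 2 * ℓ : ℕ) * y ^ (n - 2 * ℓ - 1)) /
          ((Nat.factorial (m + 2 * ℓ) : ℝ) * (Nat.factorial (n - 2 * ℓ) : ℝ))) y := by
  unfold G
  apply HasDerivAt.fun_sum
  intro ℓ _
  exact (((hasDerivAt_pow (n - 2 * ℓ) y).const_mul ((-1:ℝ)^ℓ * x ^ (m + 2 * ℓ))).div_const _)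

lemma Gx_eq (m n : ℕ) (x y : ℝ) :
    Gx m n x y = ∑ ℓ ∈ Finset.range (n / 2 + 1),
        (-1 : ℝ) ^ ℓ * ((m + 2 * ℓ : ℕ) * x ^ (m + 2 * ℓ - 1)) * y ^ (n - 2 * ℓ) /
          ((Nat.factorial (m + 2 * ℓ) : ℝ) * (Nat.factorial (n - 2 * ℓ) : ℝ)) :=
  (hasDerivAt_G_x m n x y).deriv

lemma Gy_eq (m n : ℕ) (x y : ℝ) :
    Gy m n x y = ∑ ℓ ∈ Finset.range (n / 2 + 1),
        (-1 : ℝ) ^ ℓ * x ^ (m + 2 * ℓ) * ((n - 2 * ℓ : ℕ) * y ^ (n - 2 * ℓ - 1)) /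
          ((Nat.factorial (m + 2 * ℓ) : ℝ) * (Nat.factorial (n - 2 * ℓ) : ℝ)) :=
  (hasDerivAt_G_y m n x y).deriv

lemma pow_key (x : ℝ) (a : ℕ) : x * ((a : ℝ) * x ^ (a - 1)) = (a : ℝ) * x ^ a := by
  cases a with
  | zero => simp
  | succ b => push_cast; rw [pow_succ]; ring

lemma euler (m n : ℕ) (x y : ℝ) :
    x * Gx m n x y + y * Gy m n x y = ((m + n : ℕ) : ℝ) * G m n x y := by
  rw [Gx_eq, Gy_eq]
  unfold G
  rw [Finset.mul_sum, Finset.mul_sum, Finset.mul_sum, ← Finset.sum_add_distrib]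
  refine Finset.sum_congr rfl fun ℓ hℓ => ?_
  have h2 : 2 * ℓ ≤ n := by
    have := Finset.mem_range.mp hℓ
    omega
  have hcn : m + n = (m + 2 * ℓ) + (n - 2 * ℓ) := by omega
  have hc : ((m + n : ℕ) : ℝ) = ((m + 2 * ℓ : ℕ) : ℝ) + ((n - 2 * ℓ : ℕ) : ℝ) := by
    rw [hcn, Nat.cast_add]
  have h1 := pow_key x (m + 2 * ℓ)
  have h2' := pow_key y (n - 2 * ℓ)
  have rearr :
      x * ((-1 : ℝ) ^ ℓ * ((m + 2 * ℓ : ℕ) * x ^ (m + 2 * ℓ - 1)) * y ^ (n - 2 * ℓ) /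
          ((Nat.factorial (m + 2 * ℓ) : ℝ) * (Nat.factorial (n - 2 * ℓ) : ℝ))) +
        y * ((-1 : ℝ) ^ ℓ * x ^ (m + 2 * ℓ) * ((n - 2 * ℓ : ℕ) * y ^ (n - 2 * ℓ - 1)) /
          ((Nat.factorial (m + 2 * ℓ) : ℝ) * (Nat.factorial (n - 2 * ℓ) : ℝ))) =
      ((-1 : ℝ) ^ ℓ * y ^ (n - 2 * ℓ) * (x * ((m + 2 * ℓ : ℕ) * x ^ (m + 2 * ℓ - 1))) +
        (-1 : ℝ) ^ ℓ * x ^ (m + 2 * ℓ) * (y * ((n - 2 * ℓ : ℕ) * y ^ (n - 2 * ℓ - 1)))) /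
          ((Nat.factorial (m + 2 * ℓ) : ℝ) * (Nat.factorial (n - 2 * ℓ) : ℝ)) := by
    ring
  rw [rearr, h1, h2', hc]
  ring

lemma Gx1 (n : ℕ) (x y : ℝ) : Gx 1 n x y = G 0 n x y := by
  rw [Gx_eq]
  unfold G
  refine Finset.sum_congr rfl fun ℓ _ => ?_
  have e1 : 1 + 2 * ℓ - 1 = 0 + 2 * ℓ := by omega
  have e2 : (1 + 2 * ℓ).factorial = (1 + 2 * ℓ) * (0 + 2 * ℓ).factorial := by
    rw [Nat.add_comm 1 (2 * ℓ)]
    simp [Nat.factorial_succ]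
  rw [e1, e2]
  have hf : ((0 + 2 * ℓ).factorial : ℝ) ≠ 0 := Nat.cast_ne_zero.mpr (Nat.factorial_ne_zero _)
  have hg : ((n - 2 * ℓ).factorial : ℝ) ≠ 0 := Nat.cast_ne_zero.mpr (Nat.factorial_ne_zero _)
  have hl : ((1 + 2 * ℓ : ℕ) : ℝ) ≠ 0 := by positivity
  push_cast
  field_simp

lemma Gx0 (n : ℕ) (x y : ℝ) : Gx 0 (n + 2) x y = -G 1 n x y := by
  rw [Gx_eq]
  have hr : (n + 2) / 2 + 1 = (n / 2 + 1) + 1 := by omega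
  rw [hr, Finset.sum_range_succ']
  have h0 : (-1 : ℝ) ^ 0 * ((0 + 2 * 0 : ℕ) * x ^ (0 + 2 * 0 - 1)) * y ^ (n + 2 - 2 * 0) /
      ((Nat.factorial (0 + 2 * 0) : ℝ) * (Nat.factorial (n + 2 - 2 * 0) : ℝ)) = 0 := by
    norm_num
  rw [h0, add_zero]
  unfold G
  rw [← Finset.sum_neg_distrib]
  refine Finset.sum_congr rfl fun j _ => ?_
  have e1 : 0 + 2 * (j + 1) = 2 * j + 2 := by omega
  have e2 : 0 + 2 * (j + 1) - 1 = 1 + 2 * j := by omega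
  have e3 : n + 2 - 2 * (j + 1) = n - 2 * j := by omega
  rw [e1, e3]
  have e2' : 2 * j + 2 - 1 = 1 + 2 * j := by omega
  rw [e2']
  have ef : (2 * j + 2).factorial = (2 * j + 2) * (1 + 2 * j).factorial := by
    have : 2 * j + 2 = (1 + 2 * j) + 1 := by omega
    rw [this, Nat.factorial_succ]
  rw [ef]
  have hf : ((1 + 2 * j).factorial : ℝ) ≠ 0 := Nat.cast_ne_zero.mpr (Nat.factorial_ne_zero _)
  have hg : ((n - 2 * j).factorial : ℝ) ≠ 0 := Nat.cast_ne_zero.mpr (Nat.factorial_ne_zero _)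
  have hl : ((2 * j + 2 : ℕ) : ℝ) ≠ 0 := by positivity
  rw [pow_succ]
  push_cast
  field_simp

lemma Gy_succ (m n : ℕ) (x y : ℝ) : Gy m (n + 1) x y = G m n x y := by
  rw [Gy_eq]
  have hsub : Finset.range (n / 2 + 1) ⊆ Finset.range ((n + 1) / 2 + 1) := by
    apply Finset.range_subset_range.mpr
    omega
  rw [← Finset.sum_subset hsub (by
    intro ℓ hℓ hℓ'
    have h1 := Finset.mem_range.mp hℓ
    have h2 : ¬ ℓ < n / 2 + 1 := fun h => hℓ' (Finset.mem_range.mpr h)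
    have hz : n + 1 - 2 * ℓ = 0 := by omega
    rw [hz]
    norm_num)]
  unfold G
  refine Finset.sum_congr rfl fun ℓ hℓ => ?_
  have h2 : 2 * ℓ ≤ n := by
    have := Finset.mem_range.mp hℓ
    omega
  have e : n + 1 - 2 * ℓ = (n - 2 * ℓ) + 1 := by omega
  rw [e, Nat.add_sub_cancel, Nat.factorial_succ]
  generalize (n - 2 * ℓ) = a
  have hf : ((m + 2 * ℓ).factorial : ℝ) ≠ 0 := Nat.cast_ne_zero.mpr (Nat.factorial_ne_zero _)
  have hg : ((a).factorial : ℝ) ≠ 0 := Nat.cast_ne_zero.mpr (Nat.factorial_ne_zero _)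
  have hl : ((a : ℝ) + 1) ≠ 0 := by positivity
  push_cast
  field_simp

lemma Gx01 (x y : ℝ) : Gx 0 1 x y = 0 := by
  rw [Gx_eq]
  norm_num

lemma G00 (x y : ℝ) : G 0 0 x y = 1 := by
  unfold G
  norm_num

lemma G01 (x y : ℝ) : G 0 1 x y = y := by
  unfold G
  norm_num

lemma G10 (x y : ℝ) : G 1 0 x y = x := by
  unfold G
  norm_num

theorem rotated_gradient_relations (p : ℕ) (hp : 1 ≤ p) (r s : ℝ) :
    (Gx 0 p r s * s + Gy 0 p r s * (-r) = -(p : ℝ) * G 1 (p - 1) r s) ∧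
    (Gx 1 (p - 1) r s * s + Gy 1 (p - 1) r s * (-r) = (p : ℝ) * G 0 p r s) ∧
    (G 0 p r s * (Gx 1 (p - 1) r s * s + Gy 1 (p - 1) r s * (-r))
        - G 1 (p - 1) r s * (Gx 0 p r s * s + Gy 0 p r s * (-r))
      = (p : ℝ) * ((G 0 p r s) ^ 2 + (G 1 (p - 1) r s) ^ 2)) := by
  match p, hp with
  | 1, _ =>
    have hgy : Gy 0 1 r s = G 0 0 r s := Gy_succ 0 0 r s
    have hgx1 : Gx 1 0 r s = G 0 0 r s := Gx1 0 r s
    have hgy1 : Gy 1 0 r s = 0 := by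
      rw [Gy_eq]
      norm_num
    simp only [Nat.sub_self]
    rw [Gx01, hgy, hgx1, hgy1, G00, G01, G10]
    refine ⟨?_, ?_, ?_⟩ <;> (push_cast; ring)
  | (n + 2), _ =>
    have hd : n + 2 - 1 = n + 1 := by omega
    rw [hd]
    have h1 : Gx 0 (n + 2) r s = -G 1 n r s := Gx0 n r s
    have h2 : Gy 0 (n + 2) r s = G 0 (n + 1) r s := Gy_succ 0 (n + 1) r s
    have h3 : Gx 1 (n + 1) r s = G 0 (n + 1) r s := Gx1 (n + 1) r s
    have h4 : Gy 1 (n + 1) r s = G 1 n r s := Gy_succ 1 n r s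
    have e1 := euler 1 (n + 1) r s
    have e2 := euler 0 (n + 2) r s
    rw [h3, h4] at e1
    rw [h1, h2] at e2
    push_cast at e1 e2 ⊢
    have ha : Gx 0 (n + 2) r s * s + Gy 0 (n + 2) r s * (-r)
        = -((n : ℝ) + 2) * G 1 (n + 1) r s := by
      rw [h1, h2]; linarith
    have hb : Gx 1 (n + 1) r s * s + Gy 1 (n + 1) r s * (-r)
        = ((n : ℝ) + 2) * G 0 (n + 2) r s := by
      rw [h3, h4]; linarith
    refine ⟨ha, hb, ?_⟩
    rw [ha, hb]
    ring
end

section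
/- Fix a positive integer p and real numbers r, s with r² + s² > 0. Then the 2×2 matrix [[G_{0,p}(r,s), G_{1,p-1}(r,s)], [∇G_{0,p}(r,s)·(s,-r), ∇G_{1,p-1}(r,s)·(s,-r)]] has determinant equal to p·(r²+s²)^p/(p!)², which is strictly positive; hence the matrix is invertible. -/
open Finset Complex

lemma I_pow_even (ℓ : ℕ) : Complex.I ^ (2*ℓ) = Complex.ofReal ((-1:ℝ)^ℓ) := by
  rw [pow_mul, Complex.I_sq]; push_cast; ring

lemma re_pow (n : ℕ) (x y : ℝ) :
    (((y:ℂ) + x*Complex.I)^n).re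
      = ∑ ℓ ∈ range (n/2+1), (-1:ℝ)^ℓ * x^(2*ℓ) * y^(n-2*ℓ) * (n.choose (2*ℓ)) := by
  rw [add_comm, add_pow, Complex.re_sum]
  have h : ∀ k ∈ range (n+1),
      (((x:ℂ)*Complex.I)^k * (y:ℂ)^(n-k) * (n.choose k : ℂ)).re
        = (x^k * y^(n-k) * (n.choose k) : ℝ) * (Complex.I^k).re := by
    intro k _
    rw [mul_pow]
    have : ((x:ℂ))^k * Complex.I^k * (y:ℂ)^(n-k) * (n.choose k : ℂ)
        = ((x^k * y^(n-k) * (n.choose k) : ℝ) : ℂ) * Complex.I^k := by push_cast; ring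
    rw [this, Complex.re_ofReal_mul]
  rw [Finset.sum_congr rfl h]
  rw [← Finset.sum_filter_of_ne (p := fun k => Even k) (by
    intro k _ hk
    by_contra hodd
    obtain ⟨ℓ, rfl⟩ := (Nat.not_even_iff_odd.mp hodd)
    have : (Complex.I^(2*ℓ+1)).re = 0 := by
      rw [pow_succ, I_pow_even]; simp [← Complex.ofReal_pow, Complex.mul_re]
    exact hk (by rw [this, mul_zero]))]
  refine Finset.sum_nbij' (fun k => k/2) (fun ℓ => 2*ℓ) ?_ ?_ ?_ ?_ ?_
  · intro a ha
    simp only [mem_filter, mem_range] at ha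
    simp only [mem_range]
    omega
  · intro b hb
    simp only [mem_range] at hb
    simp only [mem_filter, mem_range]
    exact ⟨by omega, ⟨b, by omega⟩⟩
  · intro a ha
    simp only [mem_filter, mem_range] at ha
    obtain ⟨_, ℓ, rfl⟩ := ha
    try dsimp only
    omega
  · intro b _
    try dsimp only
    omega
  · intro a ha
    simp only [mem_filter, mem_range] at ha
    obtain ⟨_, ℓ, rfl⟩ := ha
    have h1 : (ℓ+ℓ)/2 = ℓ := by omega
    have h2 : Complex.I^(ℓ+ℓ) = Complex.ofReal ((-1:ℝ)^ℓ) := by rw [← two_mul, I_pow_even]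
    have h3 : 2*ℓ = ℓ + ℓ := by omega
    rw [h1, h2, h3, Complex.ofReal_re]
    ring

lemma im_pow (n : ℕ) (x y : ℝ) :
    (((y:ℂ) + x*Complex.I)^(n+1)).im
      = ∑ ℓ ∈ range (n/2+1), (-1:ℝ)^ℓ * x^(2*ℓ+1) * y^(n-2*ℓ) * ((n+1).choose (2*ℓ+1)) := by
  rw [add_comm, add_pow, Complex.im_sum]
  have h : ∀ k ∈ range (n+2),
      (((x:ℂ)*Complex.I)^k * (y:ℂ)^(n+1-k) * ((n+1).choose k : ℂ)).im
        = (x^k * y^(n+1-k) * ((n+1).choose k) : ℝ) * (Complex.I^k).im := by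
    intro k _
    rw [mul_pow]
    have : ((x:ℂ))^k * Complex.I^k * (y:ℂ)^(n+1-k) * (((n+1).choose k : ℕ) : ℂ)
        = ((x^k * y^(n+1-k) * ((n+1).choose k) : ℝ) : ℂ) * Complex.I^k := by push_cast; ring
    rw [this, Complex.im_ofReal_mul]
  rw [Finset.sum_congr rfl h]
  rw [← Finset.sum_filter_of_ne (p := fun k => Odd k) (by
    intro k _ hk
    by_contra heven
    obtain ⟨ℓ, rfl⟩ : Even k := Nat.not_odd_iff_even.mp heven
    have h2 : (Complex.I ^ (ℓ + ℓ)).im = 0 := by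
      rw [← two_mul, I_pow_even]; simp [← Complex.ofReal_pow]
    exact hk (by rw [h2, mul_zero]))]
  refine Finset.sum_nbij' (fun k => k/2) (fun ℓ => 2*ℓ+1) ?_ ?_ ?_ ?_ ?_
  · intro a ha
    simp only [mem_filter, mem_range] at ha
    simp only [mem_range]
    obtain ⟨_, ℓ, rfl⟩ := ha
    try dsimp only
    omega
  · intro b hb
    simp only [mem_range] at hb
    simp only [mem_filter, mem_range]
    exact ⟨by omega, ⟨b, by omega⟩⟩
  · intro a ha
    simp only [mem_filter, mem_range] at ha
    obtain ⟨_, ℓ, rfl⟩ := ha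
    try dsimp only
    omega
  · intro b _
    try dsimp only
    omega
  · intro a ha
    simp only [mem_filter, mem_range] at ha
    obtain ⟨_, ℓ, rfl⟩ := ha
    have h1 : (2*ℓ+1)/2 = ℓ := by omega
    have h2 : Complex.I^(2*ℓ+1) = Complex.ofReal ((-1:ℝ)^ℓ) * Complex.I := by
      rw [pow_succ, I_pow_even]
    have h3 : n + 1 - (2*ℓ+1) = n - 2*ℓ := by omega
    rw [h1, h2, h3]
    simp only [Complex.mul_im, Complex.ofReal_re, Complex.ofReal_im, Complex.I_im,
      Complex.I_re, mul_one, mul_zero, zero_mul, add_zero]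
    ring

lemma G0_eq (n : ℕ) (x y : ℝ) :
    G 0 n x y = (((y:ℂ) + x*Complex.I)^n).re / (Nat.factorial n : ℝ) := by
  rw [re_pow, Finset.sum_div, G]
  refine Finset.sum_congr rfl ?_
  intro ℓ hℓ
  simp only [mem_range] at hℓ
  have h2 : 2*ℓ ≤ n := by omega
  have hfac : (n.choose (2*ℓ)) * ((2*ℓ).factorial * (n - 2*ℓ).factorial) = n.factorial := by
    rw [← mul_assoc]; exact Nat.choose_mul_factorial_mul_factorial h2
  have hne1 : ((2*ℓ).factorial : ℝ) ≠ 0 := by positivity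
  have hne2 : ((n-2*ℓ).factorial : ℝ) ≠ 0 := by positivity
  have hne3 : ((n.factorial : ℕ) : ℝ) ≠ 0 := by positivity
  have hcast : ((n.choose (2*ℓ) : ℕ) : ℝ) * (((2*ℓ).factorial : ℝ) * ((n - 2*ℓ).factorial : ℝ)) = (n.factorial : ℝ) := by
    exact_mod_cast congrArg (Nat.cast : ℕ → ℝ) hfac
  simp only [zero_add]
  field_simp
  linear_combination (-x^(2*ℓ) * y^(n-2*ℓ)) * hcast

lemma G1_eq (n : ℕ) (x y : ℝ) :
    G 1 n x y = (((y:ℂ) + x*Complex.I)^(n+1)).im / (Nat.factorial (n+1) : ℝ) := by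
  rw [im_pow, Finset.sum_div, G]
  refine Finset.sum_congr rfl ?_
  intro ℓ hℓ
  simp only [mem_range] at hℓ
  have h2 : 2*ℓ+1 ≤ n+1 := by omega
  have hfac : ((n+1).choose (2*ℓ+1)) * ((2*ℓ+1).factorial * (n+1 - (2*ℓ+1)).factorial) = (n+1).factorial := by
    rw [← mul_assoc]; exact Nat.choose_mul_factorial_mul_factorial h2
  have hsub : n + 1 - (2*ℓ+1) = n - 2*ℓ := by omega
  rw [hsub] at hfac
  have hne3 : (((n+1).factorial : ℕ) : ℝ) ≠ 0 := by positivity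
  have hne1 : ((2*ℓ+1).factorial : ℝ) ≠ 0 := by positivity
  have hne2 : ((n-2*ℓ).factorial : ℝ) ≠ 0 := by positivity
  have hcast : (((n+1).choose (2*ℓ+1) : ℕ) : ℝ) * (((2*ℓ+1).factorial : ℝ) * ((n - 2*ℓ).factorial : ℝ)) = ((n+1).factorial : ℝ) := by
    exact_mod_cast congrArg (Nat.cast : ℕ → ℝ) hfac
  have hexp : 1 + 2*ℓ = 2*ℓ + 1 := by omega
  rw [hexp]
  field_simp
  linear_combination (-x^(2*ℓ+1) * y^(n-2*ℓ)) * hcast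

lemma hasDeriv_x (y : ℝ) (p : ℕ) (x : ℝ) :
    HasDerivAt (fun t : ℝ => ((y:ℂ) + t*Complex.I)^p)
      ((p:ℂ) * ((y:ℂ)+x*Complex.I)^(p-1) * Complex.I) x := by
  have h1 : HasDerivAt (fun t : ℝ => (t:ℂ) * Complex.I) Complex.I x := by
    simpa using (Complex.ofRealCLM.hasDerivAt (x := x)).mul_const Complex.I
  have h2 : HasDerivAt (fun t : ℝ => (y:ℂ) + t*Complex.I) Complex.I x := h1.const_add _
  have h3 := HasDerivAt.scomp (x := x)
    (hasDerivAt_pow p ((y:ℂ) + x*Complex.I)) h2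
  have h4 : HasDerivAt (fun t : ℝ => ((y:ℂ)+t*Complex.I)^p)
      (Complex.I • ((p:ℂ) * ((y:ℂ)+x*Complex.I)^(p-1))) x := h3
  convert h4 using 1
  rw [smul_eq_mul]; ring

lemma hasDeriv_y (x : ℝ) (p : ℕ) (y : ℝ) :
    HasDerivAt (fun t : ℝ => ((t:ℂ) + x*Complex.I)^p)
      ((p:ℂ) * ((y:ℂ)+x*Complex.I)^(p-1)) y := by
  have h2 : HasDerivAt (fun t : ℝ => (t:ℂ) + x*Complex.I) 1 y := by
    simpa using (Complex.ofRealCLM.hasDerivAt (x := y)).add_const ((x:ℂ)*Complex.I)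
  have h3 := HasDerivAt.scomp (x := y)
    (hasDerivAt_pow p ((y:ℂ) + x*Complex.I)) h2
  have h4 : HasDerivAt (fun t : ℝ => ((t:ℂ)+x*Complex.I)^p)
      ((1:ℂ) • ((p:ℂ) * ((y:ℂ)+x*Complex.I)^(p-1))) y := h3
  convert h4 using 1
  rw [smul_eq_mul]; ring

theorem transmission_matrix_det (p : ℕ) (hp : 1 ≤ p) (r s : ℝ)
    (hrs : 0 < r ^ 2 + s ^ 2) :
    (Matrix.det !![G 0 p r s, G 1 (p - 1) r s;
        Gx 0 p r s * s + Gy 0 p r s * (-r),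
        Gx 1 (p - 1) r s * s + Gy 1 (p - 1) r s * (-r)]
      = (p : ℝ) * (r ^ 2 + s ^ 2) ^ p / ((Nat.factorial p : ℝ)) ^ 2) ∧
    0 < (p : ℝ) * (r ^ 2 + s ^ 2) ^ p / ((Nat.factorial p : ℝ)) ^ 2 ∧
    IsUnit (Matrix.det !![G 0 p r s, G 1 (p - 1) r s;
        Gx 0 p r s * s + Gy 0 p r s * (-r),
        Gx 1 (p - 1) r s * s + Gy 1 (p - 1) r s * (-r)]) := by
  have hp1 : p - 1 + 1 = p := Nat.succ_pred_eq_of_pos hp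
  set z : ℂ := (s:ℂ) + r*Complex.I with hzdef
  have hppos : (0:ℝ) < p := by exact_mod_cast hp
  have hfne : ((Nat.factorial p : ℕ) : ℝ) ≠ 0 := by positivity
  -- entries
  have hG0 : G 0 p r s = (z^p).re / (Nat.factorial p : ℝ) := G0_eq p r s
  have hG1 : G 1 (p-1) r s = (z^p).im / (Nat.factorial p : ℝ) := by
    have := G1_eq (p-1) r s
    rwa [hp1] at this
  have hGx0 : Gx 0 p r s = -((p:ℝ) * (z^(p-1)).im) / (Nat.factorial p : ℝ) := by
    have hfun : (fun t : ℝ => G 0 p t s)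
        = fun t : ℝ => (((s:ℂ) + t*Complex.I)^p).re / (Nat.factorial p : ℝ) :=
      funext fun t => G0_eq p t s
    have hd := (Complex.reCLM.hasFDerivAt.comp_hasDerivAt r (hasDeriv_x s p r)).div_const
      ((Nat.factorial p : ℕ) : ℝ)
    simp only [Function.comp_def, Complex.reCLM_apply] at hd
    rw [Gx, hfun, hd.deriv]
    simp [Complex.mul_re]
    rw [hzdef]
  have hGy0 : Gy 0 p r s = ((p:ℝ) * (z^(p-1)).re) / (Nat.factorial p : ℝ) := by
    have hfun : (fun t : ℝ => G 0 p r t)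
        = fun t : ℝ => (((t:ℂ) + r*Complex.I)^p).re / (Nat.factorial p : ℝ) :=
      funext fun t => G0_eq p r t
    have hd := (Complex.reCLM.hasFDerivAt.comp_hasDerivAt s (hasDeriv_y r p s)).div_const
      ((Nat.factorial p : ℕ) : ℝ)
    simp only [Function.comp_def, Complex.reCLM_apply] at hd
    rw [Gy, hfun, hd.deriv]
    simp [Complex.mul_re]
    rw [hzdef]
  have hGx1 : Gx 1 (p-1) r s = ((p:ℝ) * (z^(p-1)).re) / (Nat.factorial p : ℝ) := by
    have hfun : (fun t : ℝ => G 1 (p-1) t s)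
        = fun t : ℝ => (((s:ℂ) + t*Complex.I)^p).im / (Nat.factorial p : ℝ) := by
      funext t
      have := G1_eq (p-1) t s
      rwa [hp1] at this
    have hd := (Complex.imCLM.hasFDerivAt.comp_hasDerivAt r (hasDeriv_x s p r)).div_const
      ((Nat.factorial p : ℕ) : ℝ)
    simp only [Function.comp_def, Complex.imCLM_apply] at hd
    rw [Gx, hfun, hd.deriv]
    simp [Complex.mul_im]
    rw [hzdef]
  have hGy1 : Gy 1 (p-1) r s = ((p:ℝ) * (z^(p-1)).im) / (Nat.factorial p : ℝ) := by
    have hfun : (fun t : ℝ => G 1 (p-1) r t)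
        = fun t : ℝ => (((t:ℂ) + r*Complex.I)^p).im / (Nat.factorial p : ℝ) := by
      funext t
      have := G1_eq (p-1) r t
      rwa [hp1] at this
    have hd := (Complex.imCLM.hasFDerivAt.comp_hasDerivAt s (hasDeriv_y r p s)).div_const
      ((Nat.factorial p : ℕ) : ℝ)
    simp only [Function.comp_def, Complex.imCLM_apply] at hd
    rw [Gy, hfun, hd.deriv]
    simp [Complex.mul_im]
    rw [hzdef]
  -- key complex identity
  have hre : z.re = s := by simp [hzdef]
  have him : z.im = r := by simp [hzdef]
  have hnorm : Complex.normSq z = r^2 + s^2 := by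
    rw [Complex.normSq_apply, hre, him]; ring
  have hzp : z^p = z^(p-1) * z := by
    conv_lhs => rw [← hp1]
    exact pow_succ z (p-1)
  have hz : z^p * (starRingEnd ℂ) (z^(p-1)) = z * (((r^2+s^2 : ℝ) : ℂ))^(p-1) := by
    rw [hzp, map_pow]
    have h4 : z^(p-1) * z * ((starRingEnd ℂ) z)^(p-1)
        = z * (z * (starRingEnd ℂ) z)^(p-1) := by rw [mul_pow]; ring
    rw [h4, Complex.mul_conj, hnorm]
  have hre1 := congrArg Complex.re hz
  have him1 := congrArg Complex.im hz
  simp only [Complex.mul_re, Complex.mul_im, Complex.conj_re, Complex.conj_im,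
    ← Complex.ofReal_pow, Complex.ofReal_re, Complex.ofReal_im, hre, him,
    mul_zero, zero_mul, sub_zero, add_zero, mul_neg, sub_neg_eq_add] at hre1 him1
  have hpow : (r^2+s^2)^p = (r^2+s^2)^(p-1) * (r^2+s^2) := by
    conv_lhs => rw [← hp1]
    exact pow_succ _ (p-1)
  have hdet : Matrix.det !![G 0 p r s, G 1 (p - 1) r s;
        Gx 0 p r s * s + Gy 0 p r s * (-r),
        Gx 1 (p - 1) r s * s + Gy 1 (p - 1) r s * (-r)]
      = (p : ℝ) * (r ^ 2 + s ^ 2) ^ p / ((Nat.factorial p : ℝ)) ^ 2 := by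
    rw [Matrix.det_fin_two_of, hG0, hG1, hGx0, hGy0, hGx1, hGy1]
    have hexpand : (z ^ p).re / ↑p.factorial *
          (↑p * (z ^ (p - 1)).re / ↑p.factorial * s + ↑p * (z ^ (p - 1)).im / ↑p.factorial * (-r)) -
        (z ^ p).im / ↑p.factorial *
          (-(↑p * (z ^ (p - 1)).im) / ↑p.factorial * s + ↑p * (z ^ (p - 1)).re / ↑p.factorial * (-r))
        = ((p:ℝ) * (s * ((z ^ p).re * (z ^ (p - 1)).re + (z ^ p).im * (z ^ (p - 1)).im)
            + r * (-((z ^ p).re * (z ^ (p - 1)).im) + (z ^ p).im * (z ^ (p - 1)).re)))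
          / ((Nat.factorial p : ℝ))^2 := by
      ring
    rw [hexpand, hre1, him1, hpow]
    ring
  refine ⟨hdet, by positivity, ?_⟩
  rw [hdet]
  exact isUnit_iff_ne_zero.mpr (by positivity)
end
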